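/- Theorem (average TreeExplorer code length). Fix n ≥ 2. For any probability distribution p on the (finite) set of rooted plane trees with n nodes, the expected length of the TreeExplorer code, E[|TE(T)|] = Σ_T p(T)·|TE(T)|, is at most 2n − 2 bits. -/

import Mathlib

/-- A rooted plane tree: a root node together with a finite ordered list of
subtrees, the subtrees rooted at the children of the root. -/
inductive PTree : Type
  | node : List PTree → PTree

namespace PTree

/-- The subtrees rooted at the children of the root. -/
def children : PTree → List PTree
  | node ts => ts

mutual
/-- Number of nodes of a rooted plane tree. -/
def numNodes : PTree → ℕ
  | node ts => 1 + numNodesList ts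
def numNodesList : List PTree → ℕ
  | [] => 0
  | t :: ts => numNodes t + numNodesList ts
end

mutual
/-- Number of leaves (nodes with no children); a single-node tree has one leaf. -/
def numLeaves : PTree → ℕ
  | node [] => 1
  | node (t :: ts) => numLeaves t + numLeavesList ts
def numLeavesList : List PTree → ℕ
  | [] => 0
  | t :: ts => numLeaves t + numLeavesList ts
end

/-- Symbols of the ternary pit-climbing code: ↓, ↑, ⇑. -/
inductive PCSym : Type
  | down   -- ↓ : fall to the leftmost unexplored leaf
  | up     -- ↑ : climb to a never-before-visited node
  | upSeen -- ⇑ : climb to an already-visited node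
deriving DecidableEq

mutual
/-- Ternary pit-climbing code TPC: empty for a single node; `TPC t ++ [↑]` for a
single child subtree `t`; `TPC t₁ ++ [↑,↓] ++ TPC t₂ ++ [⇑,↓] ++ ⋯ ++ [⇑,↓] ++ TPC tₖ ++ [⇑]`
for children subtrees `t₁, …, tₖ`, `k ≥ 2`. -/
def TPC : PTree → List PCSym
  | node [] => []
  | node [t] => TPC t ++ [.up]
  | node (t₁ :: t₂ :: ts) => TPC t₁ ++ [.up, .down] ++ TPCRest (t₂ :: ts)
/-- TPC contribution of the second-onwards children subtrees. -/
def TPCRest : List PTree → List PCSym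
  | [] => []
  | [t] => TPC t ++ [.upSeen]
  | t :: ts => TPC t ++ [.upSeen, .down] ++ TPCRest ts
end

/-- Binary encoding of the pit-climbing symbols: ↓ ↦ 0, ⇑ ↦ 00, ↑ ↦ 1. -/
def pcBits : PCSym → List Bool
  | .down => [false]
  | .upSeen => [false, false]
  | .up => [true]

/-- Binary pit-climbing code PC. -/
def PC (T : PTree) : List Bool := (TPC T).flatMap pcBits

lemma numNodesList_append (a b : List PTree) :
    numNodesList (a ++ b) = numNodesList a + numNodesList b := by
  induction a with
  | nil => simp [numNodesList]
  | cons t ts ih => simp [numNodesList, ih]; ring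

lemma numNodesList_children_flatten (l : List PTree) :
    numNodesList ((l.map children).flatten) + l.length = numNodesList l := by
  induction l with
  | nil => simp [numNodesList]
  | cons t ts ih =>
      cases t with
      | node cs =>
        simp only [List.map_cons, List.flatten_cons, numNodesList_append,
          List.length_cons, numNodesList, children, numNodes]
        omega

/-- Breadth-first list of the sibling groups of a tree, starting from the list
`gs` of sibling groups at the current level: the groups of the current level
followed by the groups of children on the levels below, level by level and
left to right within each level. -/
def bfsGroups (gs : List (List PTree)) : List (List PTree) :=
  if h : gs.flatten.isEmpty then []
  else gs ++ bfsGroups (gs.flatten.map children)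
termination_by numNodesList gs.flatten
decreasing_by
  have h1 := numNodesList_children_flatten gs.flatten
  have h2 : gs.flatten.length ≠ 0 := by
    intro hh
    rw [List.length_eq_zero_iff] at hh
    exact h (List.isEmpty_iff.mpr hh)
  omega

/-- Symbols of the ternary tunnel-digging code: ←, →, ⇒. -/
inductive TDSym : Type
  | leaf   -- ← : a leaf node
  | inner  -- → : a node with at least one child
  | tunnel -- ⇒ : transition between consecutive non-sibling nodes
deriving DecidableEq

/-- The symbols written for one sibling group: ← for each leaf, → for each
node with at least one child. -/
def groupSyms (g : List PTree) : List TDSym :=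
  g.map (fun t => if t.children.isEmpty then .leaf else .inner)

/-- Ternary tunnel-digging code TTD: the non-root nodes in breadth-first order
(by increasing depth, left to right within each depth), ← for each leaf and →
for each internal node, with ⇒ inserted between every two consecutive
non-sibling nodes. -/
def TTD (T : PTree) : List TDSym :=
  List.intercalate [TDSym.tunnel]
    (((bfsGroups [T.children]).filter (fun g => ¬ g.isEmpty)).map groupSyms)

/-- Binary encoding of the tunnel-digging symbols: ⇒ ↦ 0, → ↦ 00, ← ↦ 1. -/
def tdBits : TDSym → List Bool
  | .tunnel => [false]
  | .inner => [false, false]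
  | .leaf => [true]

/-- Binary tunnel-digging code TD. -/
def TD (T : PTree) : List Bool := (TTD T).flatMap tdBits

/-- TreeExplorer code TE: `0·PC(T)` if `l(T) < n(T)/2`, and `1·TD(T)` otherwise. -/
def TE (T : PTree) : List Bool :=
  if 2 * numLeaves T < numNodes T then false :: PC T else true :: TD T

end PTree

/-!
Both codes have lengths linear in `n = n(T)` and `l = l(T)`: `|PC(T)| = n + 2l - 3`, and for
`n ≥ 2`, `|TD(T)| = 3n - 2l - 3`, since the nonempty sibling groups of the breadth-first order
are the child lists of the `n - l` internal nodes, giving `n - l - 1` tunnels `⇒`. TreeExplorer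
uses PC exactly when `2l < n`, so every tree with `n` nodes gets a code of at most `2n - 2`
bits, and so does every average over such trees.
-/

namespace PTree

lemma numLeavesList_append (a b : List PTree) :
    numLeavesList (a ++ b) = numLeavesList a + numLeavesList b := by
  induction a with
  | nil => simp [numLeavesList]
  | cons t ts ih => simp [numLeavesList, ih, Nat.add_assoc]

theorem length_PC_add_three (T : PTree) : (PC T).length + 3 = numNodes T + 2 * numLeaves T := by
  refine TPC.induct (fun T => (PC T).length + 3 = numNodes T + 2 * numLeaves T)
    (fun ts => ts ≠ [] →
      ((TPCRest ts).flatMap pcBits).length + 1 = numNodesList ts + 2 * numLeavesList ts)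
    ?_ ?_ ?_ (fun h => absurd rfl h) ?_ ?_ T
  · simp [PC, TPC, numNodes, numLeaves, numNodesList]
  · intro t ih
    simp only [PC, TPC, numNodes, numLeaves, numNodesList, numLeavesList,
      List.flatMap_append, List.length_append, pcBits, List.flatMap_cons,
      List.flatMap_nil, List.length_cons, List.length_nil] at ih ⊢
    omega
  · intro t₁ t₂ ts ih₁ ih₂
    have h₂ := ih₂ (List.cons_ne_nil _ _)
    simp only [PC, TPC, numNodes, numLeaves, numNodesList, numLeavesList,
      List.flatMap_append, List.length_append, pcBits, List.flatMap_cons,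
      List.flatMap_nil, List.length_cons, List.length_nil, List.append_nil] at ih₁ h₂ ⊢
    omega
  · intro t ih _
    simp only [PC, TPCRest, numNodesList, numLeavesList,
      List.flatMap_append, List.length_append, pcBits, List.flatMap_cons,
      List.flatMap_nil, List.length_cons, List.length_nil, List.append_nil] at ih ⊢
    omega
  · rintro t (_ | ⟨t', ts⟩) hne ih ihRest -
    · exact absurd rfl hne
    have h := ihRest (List.cons_ne_nil _ _)
    simp only [PC, TPCRest, numNodesList, numLeavesList,
      List.flatMap_append, List.length_append, pcBits, List.flatMap_cons,
      List.flatMap_nil, List.length_cons, List.length_nil, List.append_nil] at ih h ⊢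
    omega

lemma numLeaves_eq_ite_add (t : PTree) :
    numLeaves t = (if t.children.isEmpty then 1 else 0) + numLeavesList t.children := by
  rcases t with ⟨_ | ⟨c, cs⟩⟩ <;> simp [numLeaves, numLeavesList, children]

lemma numLeavesList_eq_countP_add (l : List PTree) :
    numLeavesList l =
      l.countP (·.children.isEmpty) + numLeavesList (l.map children).flatten := by
  induction l with
  | nil => simp [numLeavesList]
  | cons t ts ih =>
    rw [numLeavesList, numLeaves_eq_ite_add, ih]
    simp only [List.countP_cons, List.map_cons, List.flatten_cons, numLeavesList_append]
    omega

lemma countP_map_children_add_countP (l : List PTree) :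
    (l.map children).countP (!·.isEmpty) + l.countP (·.children.isEmpty) = l.length := by
  rw [List.length_eq_countP_add_countP (·.children.isEmpty), List.countP_map, Nat.add_comm]
  simp only [Function.comp_def, decide_not, Bool.decide_eq_true]

lemma length_flatten_bfsGroups (gs : List (List PTree)) :
    (bfsGroups gs).flatten.length = numNodesList gs.flatten := by
  induction gs using bfsGroups.induct with
  | case1 gs h =>
    rw [bfsGroups, dif_pos h, List.isEmpty_iff.mp h]
    rfl
  | case2 gs h ih =>
    rw [bfsGroups, dif_neg h, List.flatten_append, List.length_append, ih,
      ← numNodesList_children_flatten gs.flatten, Nat.add_comm]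

lemma countP_flatten_bfsGroups (gs : List (List PTree)) :
    (bfsGroups gs).flatten.countP (·.children.isEmpty) = numLeavesList gs.flatten := by
  induction gs using bfsGroups.induct with
  | case1 gs h =>
    rw [bfsGroups, dif_pos h, List.isEmpty_iff.mp h]
    rfl
  | case2 gs h ih =>
    rw [bfsGroups, dif_neg h, List.flatten_append, List.countP_append, ih,
      ← numLeavesList_eq_countP_add]

lemma countP_bfsGroups_add_numLeavesList (gs : List (List PTree)) :
    (bfsGroups gs).countP (!·.isEmpty) + numLeavesList gs.flatten
      = gs.countP (!·.isEmpty) + numNodesList gs.flatten := by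
  induction gs using bfsGroups.induct with
  | case1 gs h =>
    have hgs : gs.flatten = [] := List.isEmpty_iff.mp h
    have hcount : gs.countP (!·.isEmpty) = 0 := by
      simpa [List.countP_eq_zero] using List.flatten_eq_nil_iff.mp hgs
    rw [bfsGroups, dif_pos h, hcount, hgs]
    rfl
  | case2 gs h ih =>
    rw [bfsGroups, dif_neg h, List.countP_append]
    have hleaves := numLeavesList_eq_countP_add gs.flatten
    have hinner := countP_map_children_add_countP gs.flatten
    have hnodes := numNodesList_children_flatten gs.flatten
    omega

lemma length_flatMap_tdBits_groupSyms_add (g : List PTree) :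
    ((groupSyms g).flatMap tdBits).length + g.countP (·.children.isEmpty) = 2 * g.length := by
  induction g with
  | nil => rfl
  | cons t ts ih =>
    by_cases h : t.children.isEmpty <;>
      simp only [groupSyms, List.map_cons, List.flatMap_cons, List.countP_cons, h, tdBits,
        ↓reduceIte, Bool.false_eq_true, List.length_append, List.length_cons,
        List.length_nil] at ih ⊢ <;>
      omega

lemma length_flatMap_tdBits_intercalate : ∀ L : List (List PTree), L ≠ [] →
    ((List.intercalate [TDSym.tunnel] (L.map groupSyms)).flatMap tdBits).length + 1
      + L.flatten.countP (·.children.isEmpty) = 2 * L.flatten.length + L.length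
  | [], h => absurd rfl h
  | [g], _ => by
    have := length_flatMap_tdBits_groupSyms_add g
    simp only [List.map_cons, List.map_nil, List.intercalate_singleton, List.flatten_cons,
      List.flatten_nil, List.append_nil, List.length_singleton]
    omega
  | g :: g' :: L, _ => by
    have hg := length_flatMap_tdBits_groupSyms_add g
    have ih := length_flatMap_tdBits_intercalate (g' :: L) (List.cons_ne_nil _ _)
    simp only [List.map_cons, List.intercalate_cons_cons, List.flatMap_append, List.flatten_cons,
      List.length_append, List.countP_append, List.length_cons, tdBits, List.flatMap_cons,
      List.flatMap_nil, List.append_nil, List.length_nil] at ih ⊢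
    omega

theorem length_TD_add_three (T : PTree) (hT : T.children ≠ []) :
    (TD T).length + 2 * numLeaves T + 3 = 3 * numNodes T := by
  set L := (bfsGroups [T.children]).filter (!·.isEmpty) with hL
  have hTD : TD T = (List.intercalate [TDSym.tunnel] (L.map groupSyms)).flatMap tdBits := by
    simp only [TD, TTD, hL, decide_not, Bool.decide_eq_true]
  have hmem : T.children ∈ L := by
    have hne : ¬ [T.children].flatten.isEmpty := by simpa using hT
    rw [hL, bfsGroups, dif_neg hne]
    simpa using hT
  have hflatten : L.flatten = (bfsGroups [T.children]).flatten := List.flatten_filter_not_isEmpty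
  have hcode := length_flatMap_tdBits_intercalate L (List.ne_nil_of_mem hmem)
  have hnodes := length_flatten_bfsGroups [T.children]
  have hleaves := countP_flatten_bfsGroups [T.children]
  have hgroups := countP_bfsGroups_add_numLeavesList [T.children]
  have hlength : L.length = (bfsGroups [T.children]).countP (!·.isEmpty) :=
    List.countP_eq_length_filter.symm
  have hroot : [T.children].countP (!·.isEmpty) = 1 := by simpa using hT
  have hleavesT : numLeaves T = numLeavesList T.children := by
    simpa [numLeaves_eq_ite_add, List.isEmpty_iff] using hT
  have hnodesT : numNodes T = 1 + numNodesList T.children := by cases T; rfl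
  rw [List.flatten_singleton] at hnodes hleaves hgroups
  rw [hTD, hleavesT, hnodesT]
  rw [hflatten, hnodes, hleaves] at hcode
  omega

theorem length_TE_add_two_le (T : PTree) (hT : 2 ≤ numNodes T) :
    (TE T).length + 2 ≤ 2 * numNodes T := by
  rw [TE]
  split_ifs with h
  · have := length_PC_add_three T
    rw [List.length_cons]
    omega
  · have hchildren : T.children ≠ [] := by
      rintro hnil
      obtain ⟨cs⟩ := T
      cases hnil
      simp [numNodes, numNodesList] at hT
    have := length_TD_add_three T hchildren
    rw [List.length_cons]
    omega

end PTree

open PTree in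
/-- **Average TreeExplorer code length.** Fix `n ≥ 2`. For any probability
distribution `p` supported on the (finite) set of rooted plane trees with `n`
nodes, the expected length of the TreeExplorer code is at most `2n - 2` bits. -/
theorem treeExplorer_average_length (n : ℕ) (hn : 2 ≤ n)
    (s : Finset PTree) (hs : ∀ T ∈ s, numNodes T = n)
    (p : PTree → ℝ) (hp0 : ∀ T, 0 ≤ p T)
    (hsupp : ∀ T, p T ≠ 0 → T ∈ s)
    (hp1 : ∑ T ∈ s, p T = 1) :
    ∑ T ∈ s, p T * ((TE T).length : ℝ) ≤ 2 * n - 2 := by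
  have hbound : ∀ T ∈ s, ((TE T).length : ℝ) ≤ 2 * n - 2 := by
    intro T hT
    have h : (TE T).length + 2 ≤ 2 * n := hs T hT ▸ length_TE_add_two_le T (hs T hT ▸ hn)
    have h' : ((TE T).length : ℝ) + 2 ≤ 2 * n := by exact_mod_cast h
    linarith
  calc ∑ T ∈ s, p T * ((TE T).length : ℝ)
      ≤ ∑ T ∈ s, p T * (2 * n - 2) :=
        Finset.sum_le_sum fun T hT => mul_le_mul_of_nonneg_left (hbound T hT) (hp0 T)
    _ = 2 * n - 2 := by rw [← Finset.sum_mul, hp1, one_mul]
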